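/- arXiv:1603.08422 — 3 statements merged into one kernel-verified Lean document; each statement's English description precedes it below -/
import Mathlib

section
/- Let S = k[x₁,…,xₙ] over a perfect field k of characteristic p, q = p^e, and let φ ∈ Hom_{S^q}(S, S^q) be the S^q-linear map sending the basis monomial (x₁⋯xₙ)^{q−1} to 1 and all other basis monomials x₁^{i₁}⋯xₙ^{iₙ} (0 ≤ i_j ≤ q−1) to 0. Then φ generates Hom_{S^q}(S, S^q) as an S-module. -/
/-! If `S` is free over `A` with a finite basis `b` and `φ` admits a biorthogonal family `c`
(`φ (c i * b j) = δ i j`), then every `ψ : S →ₗ[A] A` equals `φ (s * ·)` for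
`s = ∑ i, ψ (b i) • c i`. For the monomial basis of `k[x]` over `k[x^q]` take
`c v = x ^ (q - 1 - v)`: the exponents of `c v' * b v` are all `≡ q - 1 (mod q)` only when
`v' = v`; otherwise the monomial is a `q`-th power times a basis monomial other than
`x ^ (q - 1)`, which `φ` kills. -/

open MvPolynomial

theorem LinearMap.exists_eq_apply_mul_of_biorthogonal {A S ι : Type*} [CommRing A] [CommRing S]
    [Algebra A S] [Finite ι] (b : Module.Basis ι A S) (φ : S →ₗ[A] A) (c : ι → S)
    (hc_self : ∀ i, φ (c i * b i) = 1) (hc_ne : ∀ i j, i ≠ j → φ (c i * b j) = 0)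
    (ψ : S →ₗ[A] A) :
    ∃ s : S, ∀ t, ψ t = φ (s * t) := by
  have := Fintype.ofFinite ι
  refine ⟨∑ i, ψ (b i) • c i, LinearMap.congr_fun (b.ext fun j => ?_ :
    ψ = φ ∘ₗ LinearMap.mulLeft A (∑ i, ψ (b i) • c i))⟩
  rw [LinearMap.comp_apply, LinearMap.mulLeft_apply, Finset.sum_mul, map_sum,
    Finset.sum_eq_single j (fun i _ hij => by rw [smul_mul_assoc, map_smul, hc_ne i j hij, smul_zero])
      (fun hj => absurd (Finset.mem_univ j) hj),
    smul_mul_assoc, map_smul, hc_self, smul_eq_mul, mul_one]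

theorem Nat.sub_one_sub_add_mod_eq_sub_one_iff {m a c : ℕ} (ha : a < m) (hc : c < m) :
    (m - 1 - a + c) % m = m - 1 ↔ a = c := by
  rcases le_or_gt c a with h | h
  · rw [Nat.mod_eq_of_lt (by omega)]
    omega
  · rw [show m - 1 - a + c = m + (c - a - 1) by omega, Nat.add_mod_left, Nat.mod_eq_of_lt (by omega)]
    omega

namespace MvPolynomial

variable {σ : Type*} [Fintype σ]

theorem prod_X_pow_eq_pow_mul_prod_X_pow_mod {R : Type*} [CommSemiring R] (u : σ → ℕ) (q : ℕ) :
    ∏ j, (X j : MvPolynomial σ R) ^ u j =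
      (∏ j, (X j : MvPolynomial σ R) ^ (u j / q)) ^ q * ∏ j, (X j : MvPolynomial σ R) ^ (u j % q) := by
  rw [← Finset.prod_pow, ← Finset.prod_mul_distrib]
  refine Finset.prod_congr rfl fun j _ => ?_
  rw [← pow_mul, ← pow_add, Nat.div_add_mod']

variable {R : Type*} [CommRing R] {A : Subring (MvPolynomial σ R)} {q : ℕ}
  (φ : MvPolynomial σ R →ₗ[A] A)

theorem map_prod_X_pow_eq_zero_of_not_forall_mod_eq (hq : 0 < q)
    (hA : ∀ f : MvPolynomial σ R, f ^ q ∈ A)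
    (hφ : ∀ u : σ → ℕ, (∀ j, u j < q) → ¬(∀ j, u j = q - 1) → φ (∏ j, X j ^ u j) = 0)
    (u : σ → ℕ) (hu : ¬∀ j, u j % q = q - 1) :
    φ (∏ j, X j ^ u j) = 0 := by
  set f := ∏ j, (X j : MvPolynomial σ R) ^ (u j / q)
  have hf : f ^ q * ∏ j, X j ^ (u j % q) = (⟨f ^ q, hA f⟩ : A) • ∏ j, X j ^ (u j % q) := rfl
  rw [prod_X_pow_eq_pow_mul_prod_X_pow_mod u q, hf, map_smul,
    hφ _ (fun j => Nat.mod_lt _ hq) hu, smul_zero]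

theorem map_prod_X_pow_sub_mul_prod_X_pow_self
    (hφ : φ (∏ j, X j ^ (q - 1)) = 1) {v : σ → ℕ} (hv : ∀ j, v j < q) :
    φ ((∏ j, X j ^ (q - 1 - v j)) * ∏ j, X j ^ v j) = 1 := by
  rw [← Finset.prod_mul_distrib, ← hφ]
  refine congrArg φ (Finset.prod_congr rfl fun j _ => ?_)
  rw [← pow_add, Nat.sub_add_cancel (Nat.le_sub_one_of_lt (hv j))]

theorem map_prod_X_pow_sub_mul_prod_X_pow_of_ne (hq : 0 < q)
    (hA : ∀ f : MvPolynomial σ R, f ^ q ∈ A)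
    (hφ : ∀ u : σ → ℕ, (∀ j, u j < q) → ¬(∀ j, u j = q - 1) → φ (∏ j, X j ^ u j) = 0)
    {v v' : σ → ℕ} (hv : ∀ j, v j < q) (hv' : ∀ j, v' j < q) (hne : v' ≠ v) :
    φ ((∏ j, X j ^ (q - 1 - v' j)) * ∏ j, X j ^ v j) = 0 := by
  rw [← Finset.prod_mul_distrib]
  simp only [← pow_add]
  refine map_prod_X_pow_eq_zero_of_not_forall_mod_eq φ hq hA hφ _ fun hmod => hne ?_
  funext j
  exact (Nat.sub_one_sub_add_mod_eq_sub_one_iff (hv' j) (hv j)).1 (hmod j)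

end MvPolynomial

theorem stmt3_general {k : Type*} [Field k] {p : ℕ} [Fact p.Prime] [CharP k p]
    (n e : ℕ)
    (b : Module.Basis {v : Fin n → ℕ // ∀ j, v j < p ^ e}
      (RingHom.range (iterateFrobenius (MvPolynomial (Fin n) k) p e))
      (MvPolynomial (Fin n) k))
    (hb : ∀ v : {v : Fin n → ℕ // ∀ j, v j < p ^ e},
      b v = ∏ j : Fin n, (X j : MvPolynomial (Fin n) k) ^ (v.1 j))
    (φ : MvPolynomial (Fin n) k →ₗ[RingHom.range (iterateFrobenius (MvPolynomial (Fin n) k) p e)]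
      RingHom.range (iterateFrobenius (MvPolynomial (Fin n) k) p e))
    (hφ : ∀ v : {v : Fin n → ℕ // ∀ j, v j < p ^ e},
      φ (b v) = if ∀ j, v.1 j = p ^ e - 1 then 1 else 0) :
    ∀ ψ : MvPolynomial (Fin n) k
        →ₗ[RingHom.range (iterateFrobenius (MvPolynomial (Fin n) k) p e)]
        RingHom.range (iterateFrobenius (MvPolynomial (Fin n) k) p e),
      ∃ s : MvPolynomial (Fin n) k, ∀ t : MvPolynomial (Fin n) k, ψ t = φ (s * t) := by
  have : Finite {v : Fin n → ℕ // ∀ j, v j < p ^ e} :=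
    Finite.of_injective (fun v j => (⟨v.1 j, v.2 j⟩ : Fin (p ^ e))) fun v w h =>
      Subtype.ext (funext fun j => congrArg Fin.val (congrFun h j))
  have hq : 0 < p ^ e := pow_pos (Fact.out : p.Prime).pos e
  have hA (f : MvPolynomial (Fin n) k) : f ^ p ^ e ∈ (iterateFrobenius _ p e).range := ⟨f, rfl⟩
  have hφ_top : φ (∏ j, X j ^ (p ^ e - 1)) = 1 := by
    simpa [hb] using hφ ⟨fun _ => p ^ e - 1, fun _ => Nat.sub_lt hq one_pos⟩
  have hφ_zero (u : Fin n → ℕ) (hu : ∀ j, u j < p ^ e) (hu' : ¬∀ j, u j = p ^ e - 1) :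
      φ (∏ j, X j ^ u j) = 0 := by
    simpa [hb, hu'] using hφ ⟨u, hu⟩
  intro ψ
  exact LinearMap.exists_eq_apply_mul_of_biorthogonal b φ (fun v => ∏ j, X j ^ (p ^ e - 1 - v.1 j))
    (fun v => by rw [hb]; exact map_prod_X_pow_sub_mul_prod_X_pow_self φ hφ_top v.2)
    (fun v' v hne => by
      rw [hb]
      exact map_prod_X_pow_sub_mul_prod_X_pow_of_ne φ hq hA hφ_zero v.2 v'.2
        (Subtype.coe_ne_coe.2 hne))
    ψ

/-- Let `S = k[x₁,…,xₙ]` over a perfect field `k` of characteristic `p`,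
`q = p^e`, and let `φ ∈ Hom_{S^q}(S, S^q)` be the `S^q`-linear map sending the basis monomial
`(x₁⋯xₙ)^{q−1}` to `1` and all other basis monomials `x₁^{i₁}⋯xₙ^{iₙ}` (`0 ≤ i_j ≤ q−1`) to
`0`.  Then `φ` generates `Hom_{S^q}(S, S^q)` as an `S`-module, where the `S`-module structure
is `(s·ψ)(t) = ψ(s·t)`: every `ψ` is of the form `ψ = s·φ` for some `s ∈ S`. -/
theorem stmt3 {k : Type*} [Field k] [PerfectField k] {p : ℕ} [Fact p.Prime] [CharP k p]
    (n e : ℕ)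
    (b : Module.Basis {v : Fin n → ℕ // ∀ j, v j < p ^ e}
      (RingHom.range (iterateFrobenius (MvPolynomial (Fin n) k) p e))
      (MvPolynomial (Fin n) k))
    (hb : ∀ v : {v : Fin n → ℕ // ∀ j, v j < p ^ e},
      b v = ∏ j : Fin n, (X j : MvPolynomial (Fin n) k) ^ (v.1 j))
    (φ : MvPolynomial (Fin n) k →ₗ[RingHom.range (iterateFrobenius (MvPolynomial (Fin n) k) p e)]
      RingHom.range (iterateFrobenius (MvPolynomial (Fin n) k) p e))
    (hφ : ∀ v : {v : Fin n → ℕ // ∀ j, v j < p ^ e},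
      φ (b v) = if ∀ j, v.1 j = p ^ e - 1 then 1 else 0) :
    ∀ ψ : MvPolynomial (Fin n) k
        →ₗ[RingHom.range (iterateFrobenius (MvPolynomial (Fin n) k) p e)]
        RingHom.range (iterateFrobenius (MvPolynomial (Fin n) k) p e),
      ∃ s : MvPolynomial (Fin n) k, ∀ t : MvPolynomial (Fin n) k, ψ t = φ (s * t) :=
  stmt3_general n e b hb φ hφ
end

section
/- Let S = k[x₁,…,xₙ] over a perfect field of characteristic p, I ⊆ S an ideal, q = p^e, and J ⊆ S^q the ideal of all q-th powers of elements of I. Then there is an isomorphism of S-modules Hom_{S^q}(S/I, S^q/J) ≅ ((I^{[q]} :_S I)/I^{[q]})·φ, where φ is the S-generator of Hom_{S^q}(S,S^q) and I^{[q]} = JS is the ideal generated by q-th powers of elements of I. -/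
open MvPolynomial

/-- Scalar restriction: any module over a commutative ring `S` is a module over any subring
`sq ⊆ S`, via the inclusion `sq → S`.  This is used below to regard the `S`-modules `S/I` and
`(I^{[q]} :_S I)/I^{[q]}` as modules over the subring `S^q`. -/
noncomputable def subringModule {S : Type*} [CommRing S] (sq : Subring S) (M : Type*)
    [AddCommGroup M] [Module S M] : Module ↥sq M :=
  Module.compHom M sq.subtype

/-
The monomials `x^v`, `0 ≤ v_j < q`, form a basis of `S` over `S^q` with
`φ (x^w * x^(q-1-v)) = δ_wv`, so `φ (s * x^(q-1-v))` is the `v`-th coordinate of `s`.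
Hence `s ∈ J S` iff `φ (s S) ⊆ J`, and, `S` being free over `S^q`, every `S^q`-linear map
`S → S^q/J` is `t ↦ φ (u t) mod J` for a unique `u ∈ S/JS`. Such a map kills `I` exactly when
`u I ⊆ J S`, and `J S = I^{[q]}`.
-/

section DualBasis

variable {S : Type*} [CommRing S] {R : Subring S}

theorem LinearMap.apply_mul_mem_of_mem_map_subtype (φ : S →ₗ[R] R) {J : Ideal R} {s : S}
    (hs : s ∈ J.map R.subtype) (t : S) : φ (s * t) ∈ J := by
  induction hs using Submodule.span_induction generalizing t with
  | mem x hx =>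
    obtain ⟨j, hj, rfl⟩ := hx
    rw [show R.subtype j * t = j • t from rfl, map_smul, smul_eq_mul]
    exact J.mul_mem_right _ hj
  | zero => simp
  | add x y _ _ hx hy => rw [add_mul, map_add]; exact add_mem (hx t) (hy t)
  | smul a x _ hx => rw [smul_eq_mul, mul_comm a, mul_assoc]; exact hx _

variable {ι : Type*} [DecidableEq ι] {b : Module.Basis ι R S} {b' : ι → S}
  {φ : S →ₗ[R] R}

theorem Module.Basis.repr_apply_eq_of_dual
    (hdual : ∀ w v, φ (b w * b' v) = if w = v then 1 else 0) (s : S) (v : ι) :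
    b.repr s v = φ (s * b' v) := by
  have h : Finsupp.lapply v ∘ₗ b.repr.toLinearMap = φ ∘ₗ LinearMap.mulRight R (b' v) :=
    b.ext fun w => by simp [hdual, Finsupp.single_apply]
  exact LinearMap.congr_fun h s

theorem Module.Basis.mem_map_subtype_iff_of_dual
    (hdual : ∀ w v, φ (b w * b' v) = if w = v then 1 else 0) (J : Ideal R) (s : S) :
    s ∈ J.map R.subtype ↔ ∀ t, φ (s * t) ∈ J := by
  refine ⟨φ.apply_mul_mem_of_mem_map_subtype, fun hs => ?_⟩
  rw [← b.linearCombination_repr s, Finsupp.linearCombination_apply]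
  refine Ideal.sum_mem _ fun v _ => Ideal.mul_mem_right _ _ (Ideal.mem_map_of_mem _ ?_)
  rw [b.repr_apply_eq_of_dual hdual]
  exact hs _

theorem Module.Basis.exists_apply_mul_eq_of_dual [Finite ι]
    (hdual : ∀ w v, φ (b w * b' v) = if w = v then 1 else 0) (ψ : S →ₗ[R] R) :
    ∃ u, ∀ t, φ (u * t) = ψ t := by
  have := Fintype.ofFinite ι
  refine ⟨∑ v, ψ (b v) • b' v, fun t => ?_⟩
  refine LinearMap.congr_fun (f := φ ∘ₗ LinearMap.mulLeft R _) (b.ext fun w => ?_) t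
  simp [Finset.sum_mul, mul_comm (b' _), hdual]

end DualBasis

section Pairing

variable {S : Type*} [CommRing S] {R : Subring S} (φ : S →ₗ[R] R) (J : Ideal R)

def dualPairing (x : S ⧸ J.map R.subtype) (t : S) : R ⧸ J :=
  Quotient.liftOn' x (fun u => Ideal.Quotient.mk J (φ (u * t))) fun u u' h => by
    rw [Ideal.Quotient.mk_eq_mk_iff_sub_mem, ← map_sub, ← sub_mul]
    exact φ.apply_mul_mem_of_mem_map_subtype ((Submodule.quotientRel_def _).mp h) t

variable {φ J}

@[simp]
theorem dualPairing_mk (u t : S) :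
    dualPairing φ J (Ideal.Quotient.mk _ u) t = Ideal.Quotient.mk J (φ (u * t)) :=
  rfl

theorem dualPairing_add_left (x y : S ⧸ J.map R.subtype) (t : S) :
    dualPairing φ J (x + y) t = dualPairing φ J x t + dualPairing φ J y t := by
  obtain ⟨u, rfl⟩ := Ideal.Quotient.mk_surjective x
  obtain ⟨u', rfl⟩ := Ideal.Quotient.mk_surjective y
  simp [← map_add, add_mul]

theorem dualPairing_smul_left (s : S) (x : S ⧸ J.map R.subtype) (t : S) :
    dualPairing φ J (s • x) t = dualPairing φ J x (s * t) := by
  obtain ⟨u, rfl⟩ := Ideal.Quotient.mk_surjective x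
  change dualPairing φ J (Ideal.Quotient.mk _ (s * u)) t = _
  rw [dualPairing_mk, dualPairing_mk, mul_assoc, mul_left_comm]

theorem dualPairing_add_right (x : S ⧸ J.map R.subtype) (t t' : S) :
    dualPairing φ J x (t + t') = dualPairing φ J x t + dualPairing φ J x t' := by
  obtain ⟨u, rfl⟩ := Ideal.Quotient.mk_surjective x
  simp [mul_add]

theorem dualPairing_smul_right (x : S ⧸ J.map R.subtype) (c : R) (t : S) :
    dualPairing φ J x (c • t) = c • dualPairing φ J x t := by
  obtain ⟨u, rfl⟩ := Ideal.Quotient.mk_surjective x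
  rw [dualPairing_mk, dualPairing_mk, mul_smul_comm, map_smul, smul_eq_mul, map_mul,
    Algebra.smul_def, Ideal.Quotient.algebraMap_eq]

theorem dualPairing_sub_right (x : S ⧸ J.map R.subtype) (t t' : S) :
    dualPairing φ J x (t - t') = dualPairing φ J x t - dualPairing φ J x t' := by
  obtain ⟨u, rfl⟩ := Ideal.Quotient.mk_surjective x
  simp [mul_sub]

variable (φ J) in
def dualPairingHom (I : Ideal S) (x : S ⧸ J.map R.subtype)
    (hx : ∀ t ∈ I, dualPairing φ J x t = 0) :
    letI := subringModule R (S ⧸ I)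
    S ⧸ I →ₗ[R] R ⧸ J :=
  letI := subringModule R (S ⧸ I)
  { toFun := fun y => Quotient.liftOn' y (dualPairing φ J x) fun t t' h => by
      rw [← sub_eq_zero, ← dualPairing_sub_right]
      exact hx _ ((Submodule.quotientRel_def _).mp h)
    map_add' := by
      rintro ⟨t⟩ ⟨t'⟩
      exact dualPairing_add_right x t t'
    map_smul' := by
      rintro c ⟨t⟩
      exact dualPairing_smul_right x c t }

@[simp]
theorem dualPairingHom_mk (I : Ideal S) (x : S ⧸ J.map R.subtype)
    (hx : ∀ t ∈ I, dualPairing φ J x t = 0) (t : S) :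
    dualPairingHom φ J I x hx (Ideal.Quotient.mk I t) = dualPairing φ J x t :=
  rfl

variable {ι : Type*} [DecidableEq ι] {b : Module.Basis ι R S} {b' : ι → S}

theorem dualPairing_eq_zero_iff (hdual : ∀ w v, φ (b w * b' v) = if w = v then 1 else 0)
    (x : S ⧸ J.map R.subtype) : (∀ t, dualPairing φ J x t = 0) ↔ x = 0 := by
  obtain ⟨u, rfl⟩ := Ideal.Quotient.mk_surjective x
  simp only [dualPairing_mk, Ideal.Quotient.eq_zero_iff_mem]
  exact (b.mem_map_subtype_iff_of_dual hdual J u).symm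

theorem mem_map_mkQ_colon_iff (hdual : ∀ w v, φ (b w * b' v) = if w = v then 1 else 0)
    (I : Ideal S) (x : S ⧸ J.map R.subtype) :
    x ∈ Submodule.map (J.map R.subtype).mkQ ((J.map R.subtype).colon I) ↔
      ∀ t ∈ I, dualPairing φ J x t = 0 := by
  obtain ⟨u, rfl⟩ := Ideal.Quotient.mk_surjective x
  constructor
  · rintro ⟨u', hu', hu'u⟩ t ht
    rw [← (Ideal.Quotient.mk_eq_mk u').symm.trans hu'u, dualPairing_mk,
      Ideal.Quotient.eq_zero_iff_mem]
    simpa using φ.apply_mul_mem_of_mem_map_subtype (Submodule.mem_colon.mp hu' t ht) 1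
  · refine fun hu => ⟨u, Submodule.mem_colon.mpr fun t ht => ?_, rfl⟩
    refine (b.mem_map_subtype_iff_of_dual hdual J _).mpr fun t' => ?_
    rw [smul_eq_mul, mul_assoc, ← Ideal.Quotient.eq_zero_iff_mem, ← dualPairing_mk]
    exact hu _ (I.mul_mem_right t' ht)

theorem exists_dualPairing_eq [Finite ι]
    (hdual : ∀ w v, φ (b w * b' v) = if w = v then 1 else 0) (ψ : S →ₗ[R] R ⧸ J) :
    ∃ x : S ⧸ J.map R.subtype, ∀ t, dualPairing φ J x t = ψ t := by
  have := Module.Projective.of_basis b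
  obtain ⟨ψ', hψ'⟩ := Module.projective_lifting_property J.mkQ ψ J.mkQ_surjective
  obtain ⟨u, hu⟩ := b.exists_apply_mul_eq_of_dual hdual ψ'
  exact ⟨Ideal.Quotient.mk _ u, fun t => by rw [dualPairing_mk, hu, ← hψ']; rfl⟩

theorem exists_linearEquiv_dualPairingHom [Finite ι]
    (hdual : ∀ w v, φ (b w * b' v) = if w = v then 1 else 0) (I : Ideal S) :
    letI := subringModule R (S ⧸ I)
    letI := subringModule R
      ↥(Submodule.map (J.map R.subtype).mkQ ((J.map R.subtype).colon I))
    ∃ eqv : ↥(Submodule.map (J.map R.subtype).mkQ ((J.map R.subtype).colon I)) ≃ₗ[R]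
        (S ⧸ I →ₗ[R] R ⧸ J),
      ∀ w t, eqv w (Ideal.Quotient.mk I t) = dualPairing φ J w t := by
  let := subringModule R (S ⧸ I)
  let := subringModule R
    ↥(Submodule.map (J.map R.subtype).mkQ ((J.map R.subtype).colon I))
  let E : ↥(Submodule.map (J.map R.subtype).mkQ ((J.map R.subtype).colon I)) →ₗ[R]
      (S ⧸ I →ₗ[R] R ⧸ J) :=
    { toFun := fun w => dualPairingHom φ J I w ((mem_map_mkQ_colon_iff (J := J) hdual I w).mp w.2)
      map_add' := fun w w' => LinearMap.ext fun y => by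
        obtain ⟨t, rfl⟩ := Ideal.Quotient.mk_surjective y
        exact dualPairing_add_left _ _ t
      map_smul' := fun c w => LinearMap.ext fun y => by
        obtain ⟨t, rfl⟩ := Ideal.Quotient.mk_surjective y
        exact (dualPairing_smul_left (c : S) _ t).trans (dualPairing_smul_right _ c t) }
  have hinj : Function.Injective E := by
    refine (injective_iff_map_eq_zero E).mpr fun w hw => Subtype.ext ?_
    refine (dualPairing_eq_zero_iff hdual _).mp fun t => ?_
    exact LinearMap.congr_fun hw (Ideal.Quotient.mk I t)
  have hsurj : Function.Surjective E := by
    intro ψ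
    let mkI : S →ₗ[R] S ⧸ I :=
      { toFun := Ideal.Quotient.mk I, map_add' := map_add _, map_smul' := fun _ _ => rfl }
    obtain ⟨x, hx⟩ := exists_dualPairing_eq hdual (ψ ∘ₗ mkI)
    have hxN : x ∈ Submodule.map (J.map R.subtype).mkQ ((J.map R.subtype).colon I) :=
      (mem_map_mkQ_colon_iff hdual I x).mpr fun t ht => by
        rw [hx, LinearMap.comp_apply, show mkI t = 0 from Ideal.Quotient.eq_zero_iff_mem.mpr ht,
          map_zero]
    refine ⟨⟨x, hxN⟩, LinearMap.ext fun y => ?_⟩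
    obtain ⟨t, rfl⟩ := Ideal.Quotient.mk_surjective y
    exact hx t
  exact ⟨LinearEquiv.ofBijective E ⟨hinj, hsurj⟩, fun _ _ => rfl⟩

end Pairing

theorem span_pow_image_eq_map_subtype {S : Type*} [CommRing S] {R : Subring S} {q : ℕ}
    (hpow : ∀ f : S, f ^ q ∈ R) {I : Ideal S} {J : Ideal R}
    (hJ : (J : Set R) = {y : R | ∃ f ∈ I, (y : S) = f ^ q}) :
    Ideal.span ((fun f => f ^ q) '' (I : Set S)) = J.map R.subtype := by
  refine congrArg Ideal.span (Set.ext fun y => ⟨?_, ?_⟩)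
  · rintro ⟨f, hf, rfl⟩
    exact ⟨⟨f ^ q, hpow f⟩, (hJ ▸ ⟨f, hf, rfl⟩ : _ ∈ (J : Set R)), rfl⟩
  · rintro ⟨c, hc, rfl⟩
    obtain ⟨f, hf, hfc⟩ : c ∈ {y : R | ∃ f ∈ I, (y : S) = f ^ q} := hJ ▸ hc
    exact ⟨f, hf, hfc.symm⟩

theorem Nat.eq_of_add_sub_one_sub_mod_eq {q a c : ℕ} (ha : a < q) (hc : c < q)
    (h : (a + (q - 1 - c)) % q = q - 1) : a = c := by
  rcases lt_or_ge (a + (q - 1 - c)) q with hlt | hge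
  · rw [Nat.mod_eq_of_lt hlt] at h
    omega
  · rw [Nat.mod_eq_sub_mod hge, Nat.mod_eq_of_lt (by omega)] at h
    omega

section Monomials

variable {k : Type*} [CommRing k] {n q : ℕ}

instance : Finite {v : Fin n → ℕ // ∀ j, v j < q} :=
  Finite.of_injective (fun v j => (⟨v.1 j, v.2 j⟩ : Fin q)) fun _ _ h =>
    Subtype.ext <| funext fun j => congrArg Fin.val (congrFun h j)

def complementExponent (v : {v : Fin n → ℕ // ∀ j, v j < q}) :
    {v : Fin n → ℕ // ∀ j, v j < q} :=
  ⟨fun j => q - 1 - v.1 j, fun j => by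
    have := v.2 j
    show q - 1 - v.1 j < q
    omega⟩

variable {sq : Subring (MvPolynomial (Fin n) k)}
  {b : Module.Basis {v : Fin n → ℕ // ∀ j, v j < q} sq (MvPolynomial (Fin n) k)}
  {φ : MvPolynomial (Fin n) k →ₗ[sq] sq}

theorem prod_X_pow_eq_smul_basis (hq : 0 < q) (hpow : ∀ f : MvPolynomial (Fin n) k, f ^ q ∈ sq)
    (hb : ∀ v, b v = ∏ j, (X j : MvPolynomial (Fin n) k) ^ v.1 j) (a : Fin n → ℕ) :
    ∏ j, (X j : MvPolynomial (Fin n) k) ^ a j =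
      (⟨(∏ j, X j ^ (a j / q)) ^ q, hpow _⟩ : sq) •
        b ⟨fun j => a j % q, fun _ => Nat.mod_lt _ hq⟩ := by
  change _ = (∏ j, X j ^ (a j / q)) ^ q * b _
  rw [hb, ← Finset.prod_pow, ← Finset.prod_mul_distrib]
  refine Finset.prod_congr rfl fun j _ => ?_
  rw [← pow_mul, ← pow_add, Nat.div_add_mod']

theorem apply_basis_mul_basis_complementExponent (hq : 0 < q)
    (hpow : ∀ f : MvPolynomial (Fin n) k, f ^ q ∈ sq)
    (hb : ∀ v, b v = ∏ j, (X j : MvPolynomial (Fin n) k) ^ v.1 j)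
    (hφ : ∀ v, φ (b v) = if ∀ j, v.1 j = q - 1 then 1 else 0) (w v) :
    φ (b w * b (complementExponent v)) = if w = v then 1 else 0 := by
  have hmul : b w * b (complementExponent v) =
      ∏ j, (X j : MvPolynomial (Fin n) k) ^ (w.1 j + (q - 1 - v.1 j)) := by
    simp only [hb, complementExponent, ← Finset.prod_mul_distrib, pow_add]
  rw [hmul, prod_X_pow_eq_smul_basis hq hpow hb, map_smul, hφ]
  by_cases hwv : w = v
  · subst hwv
    have hexp : ∀ j, w.1 j + (q - 1 - w.1 j) = q - 1 := fun j => by have := w.2 j; omega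
    simp [hexp, Nat.mod_eq_of_lt (Nat.sub_lt hq one_pos), Nat.div_eq_of_lt (Nat.sub_lt hq one_pos)]
    rfl
  · rw [if_neg hwv, if_neg, smul_zero]
    exact fun h => hwv <| Subtype.ext <| funext fun j =>
      Nat.eq_of_add_sub_one_sub_mod_eq (w.2 j) (v.2 j) (h j)

end Monomials

theorem stmt4_general {k : Type*} [Field k] {p : ℕ} [Fact p.Prime] [CharP k p]
    (n e : ℕ) (I : Ideal (MvPolynomial (Fin n) k))
    -- the subring `S^q ⊆ S`
    (sq : Subring (MvPolynomial (Fin n) k))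
    (hsq : sq = RingHom.range (iterateFrobenius (MvPolynomial (Fin n) k) p e))
    -- `J ⊆ S^q`, the ideal of `q`-th powers of elements of `I`
    (J : Ideal ↥sq)
    (hJ : (J : Set ↥sq) = {y : ↥sq | ∃ f ∈ I, (y : MvPolynomial (Fin n) k) = f ^ p ^ e})
    -- `I^{[q]} = J·S`
    (Iq : Ideal (MvPolynomial (Fin n) k))
    (hIq : Iq = Ideal.span ((fun f => f ^ p ^ e) '' (I : Set (MvPolynomial (Fin n) k))))
    -- `φ`, the `S`-generator of `Hom_{S^q}(S, S^q)` from Statement 3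
    (b : Module.Basis {v : Fin n → ℕ // ∀ j, v j < p ^ e} ↥sq (MvPolynomial (Fin n) k))
    (hb : ∀ v : {v : Fin n → ℕ // ∀ j, v j < p ^ e},
      b v = ∏ j : Fin n, (X j : MvPolynomial (Fin n) k) ^ (v.1 j))
    (φ : MvPolynomial (Fin n) k →ₗ[↥sq] ↥sq)
    (hφ : ∀ v : {v : Fin n → ℕ // ∀ j, v j < p ^ e},
      φ (b v) = if ∀ j, v.1 j = p ^ e - 1 then 1 else 0)
    -- the image `N` of `I^{[q]} :_S I` in `S/I^{[q]}`, i.e. `(I^{[q]} :_S I)/I^{[q]}`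
    (N : Submodule (MvPolynomial (Fin n) k) (MvPolynomial (Fin n) k ⧸ Iq))
    (hN : N = Submodule.map Iq.mkQ (Iq.colon I)) :
    letI : Module ↥sq (MvPolynomial (Fin n) k ⧸ I) :=
      subringModule sq (MvPolynomial (Fin n) k ⧸ I)
    letI : Module ↥sq ↥N := subringModule sq ↥N
    ∃ eqv : ↥N ≃ₗ[↥sq] ((MvPolynomial (Fin n) k ⧸ I) →ₗ[↥sq] (↥sq ⧸ J)),
      -- the isomorphism is "multiplication by `φ`": the class of `u` goes to `t ↦ φ(u·t)`
      (∀ u : MvPolynomial (Fin n) k, u ∈ Iq.colon I → ∀ w : ↥N,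
        (w : MvPolynomial (Fin n) k ⧸ Iq) = Submodule.Quotient.mk u →
        ∀ t : MvPolynomial (Fin n) k,
          eqv w (Ideal.Quotient.mk I t) = Ideal.Quotient.mk J (φ (u * t))) ∧
      -- `S`-linearity for the module structure `(s·ψ)(t) = ψ(s·t)` on the Hom side
      (∀ (s : MvPolynomial (Fin n) k) (w : ↥N) (t : MvPolynomial (Fin n) k),
        eqv (s • w) (Ideal.Quotient.mk I t) = eqv w (Ideal.Quotient.mk I (s * t))) := by
  have hq : 0 < p ^ e := pow_pos (Fact.out : p.Prime).pos e
  have hpow (f : MvPolynomial (Fin n) k) : f ^ p ^ e ∈ sq :=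
    hsq ▸ ⟨f, iterateFrobenius_def p e f⟩
  have hIq_map : Iq = J.map sq.subtype := hIq.trans (span_pow_image_eq_map_subtype hpow hJ)
  subst hIq_map hN
  obtain ⟨eqv, heqv⟩ := exists_linearEquiv_dualPairingHom
    (apply_basis_mul_basis_complementExponent hq hpow hb hφ) I
  refine ⟨eqv, fun u _ w hw t => ?_, fun s w t => ?_⟩
  · rw [heqv, hw]
    rfl
  · rw [heqv, heqv]
    exact dualPairing_smul_left s w.1 t

set_option synthInstance.maxHeartbeats 1000000 in
set_option maxHeartbeats 4000000 in
/-- **Fedder's identification.** Let `S = k[x₁,…,xₙ]` over a perfect field of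
characteristic `p`, `I ⊆ S` an ideal, `q = p^e`, and `J ⊆ S^q` the ideal of all `q`-th powers
of elements of `I`.  Then there is an isomorphism of `S`-modules
`Hom_{S^q}(S/I, S^q/J) ≅ ((I^{[q]} :_S I)/I^{[q]})·φ`, where `φ` is the `S`-generator of
`Hom_{S^q}(S, S^q)` and `I^{[q]} = J·S` is the ideal of `S` generated by the `q`-th powers of
elements of `I`.  Concretely: there is an `S^q`-linear equivalence `eqv` from
`(I^{[q]} :_S I)/I^{[q]}` (realized as the image of `I^{[q]} :_S I` in `S/I^{[q]}`) onto
`Hom_{S^q}(S/I, S^q/J)` sending the class of `u` to the map induced by `t ↦ φ(u·t)`; it is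
moreover `S`-linear for the `S`-module structure `(s·ψ)(t) = ψ(s·t)` on the Hom-module. -/
theorem stmt4 {k : Type*} [Field k] [PerfectField k] {p : ℕ} [Fact p.Prime] [CharP k p]
    (n e : ℕ) (I : Ideal (MvPolynomial (Fin n) k))
    -- the subring `S^q ⊆ S`
    (sq : Subring (MvPolynomial (Fin n) k))
    (hsq : sq = RingHom.range (iterateFrobenius (MvPolynomial (Fin n) k) p e))
    -- `J ⊆ S^q`, the ideal of `q`-th powers of elements of `I`
    (J : Ideal ↥sq)
    (hJ : (J : Set ↥sq) = {y : ↥sq | ∃ f ∈ I, (y : MvPolynomial (Fin n) k) = f ^ p ^ e})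
    -- `I^{[q]} = J·S`
    (Iq : Ideal (MvPolynomial (Fin n) k))
    (hIq : Iq = Ideal.span ((fun f => f ^ p ^ e) '' (I : Set (MvPolynomial (Fin n) k))))
    -- `φ`, the `S`-generator of `Hom_{S^q}(S, S^q)` from Statement 3
    (b : Module.Basis {v : Fin n → ℕ // ∀ j, v j < p ^ e} ↥sq (MvPolynomial (Fin n) k))
    (hb : ∀ v : {v : Fin n → ℕ // ∀ j, v j < p ^ e},
      b v = ∏ j : Fin n, (X j : MvPolynomial (Fin n) k) ^ (v.1 j))
    (φ : MvPolynomial (Fin n) k →ₗ[↥sq] ↥sq)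
    (hφ : ∀ v : {v : Fin n → ℕ // ∀ j, v j < p ^ e},
      φ (b v) = if ∀ j, v.1 j = p ^ e - 1 then 1 else 0)
    -- the image `N` of `I^{[q]} :_S I` in `S/I^{[q]}`, i.e. `(I^{[q]} :_S I)/I^{[q]}`
    (N : Submodule (MvPolynomial (Fin n) k) (MvPolynomial (Fin n) k ⧸ Iq))
    (hN : N = Submodule.map Iq.mkQ (Iq.colon I)) :
    letI : Module ↥sq (MvPolynomial (Fin n) k ⧸ I) :=
      subringModule sq (MvPolynomial (Fin n) k ⧸ I)
    letI : Module ↥sq ↥N := subringModule sq ↥N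
    ∃ eqv : ↥N ≃ₗ[↥sq] ((MvPolynomial (Fin n) k ⧸ I) →ₗ[↥sq] (↥sq ⧸ J)),
      -- the isomorphism is "multiplication by `φ`": the class of `u` goes to `t ↦ φ(u·t)`
      (∀ u : MvPolynomial (Fin n) k, u ∈ Iq.colon I → ∀ w : ↥N,
        (w : MvPolynomial (Fin n) k ⧸ Iq) = Submodule.Quotient.mk u →
        ∀ t : MvPolynomial (Fin n) k,
          eqv w (Ideal.Quotient.mk I t) = Ideal.Quotient.mk J (φ (u * t))) ∧
      -- `S`-linearity for the module structure `(s·ψ)(t) = ψ(s·t)` on the Hom side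
      (∀ (s : MvPolynomial (Fin n) k) (w : ↥N) (t : MvPolynomial (Fin n) k),
        eqv (s • w) (Ideal.Quotient.mk I t) = eqv w (Ideal.Quotient.mk I (s * t))) :=
  stmt4_general n e I sq hsq J hJ Iq hIq b hb φ hφ N hN
end

section
/- Let S be a standard graded polynomial ring in n variables over an F-finite field of characteristic p, I a homogeneous ideal with R = S/I an F-pure normal domain, and q = p^e. If the graded module (I^{[q]} :_S I)/I^{[q]} is isomorphic (as a graded module) to the (1−q)-th symbolic power ω_R^{(1−q)} shifted by n(q−1), then ν_e(𝔪) equals d_i for some i, where −d₁ < ⋯ < −d_r are the degrees of a minimal generating set of ω_R^{(1−q)} and 𝔪 is the homogeneous maximal ideal of R. Here ν_e(𝔪) := max{r ≥ 0 : 𝔪^r(I^{[q]}:I) ⊄ (x₁^{q},…,xₙ^{q})}. -/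
/-!
Write `𝔪 = (x₁,…,xₙ)` and `𝔪^{[q]} = (x₁^q,…,xₙ^q)`. Since `I` is homogeneous and proper,
`I ⊆ 𝔪`, so by additivity of Frobenius `I^{[q]} ⊆ 𝔪^{[q]}`; hence `ν_e(𝔪)` only sees the
generators `gᵢ` of `(I^{[q]} : I)`. A polynomial lies outside `𝔪^{[q]}` exactly when it has a
monomial with all exponents `< q`, i.e. dividing `(x₁⋯xₙ)^{q-1}`, of degree at most `n(q-1)`.
For `ν = ν_e(𝔪)` some `gᵢ` has `𝔪^ν gᵢ ⊄ 𝔪^{[q]}`, which gives `ν + deg gᵢ ≤ n(q-1)`, i.e. `ν ≤ dᵢ`.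
Conversely, multiplying a monomial `x^μ` of `gᵢ` with all exponents `< q` by the complementary
monomial `x^{(q-1)-μ}`, of degree `n(q-1) - deg gᵢ = dᵢ`, gives an element of
`𝔪^{dᵢ}(I^{[q]} : I)` outside `𝔪^{[q]}`, so `dᵢ ≤ ν`.
-/

open MvPolynomial

theorem Ideal.exists_mul_notMem_of_not_mul_sup_span_le {R ι : Type*} [CommRing R]
    {A J K : Ideal R} {g : ι → R} (hJ : J ≤ K) (h : ¬ A * (J ⊔ Ideal.span (Set.range g)) ≤ K) :
    ∃ i, ∃ a ∈ A, a * g i ∉ K := by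
  contrapose! h
  have hg : Ideal.span (Set.range g) ≤ K.colon A :=
    Ideal.span_le.mpr <| Set.range_subset_iff.mpr fun i =>
      Submodule.mem_colon.mpr fun a ha => by simpa [mul_comm] using h i a ha
  rw [Ideal.mul_sup]
  refine sup_le (Ideal.mul_le_right.trans hJ) (Ideal.mul_le.mpr fun a ha b hb => ?_)
  simpa [mul_comm] using Submodule.mem_colon.mp (hg hb) a ha

namespace MvPolynomial

section idealOfVarPows

variable {σ R : Type*} [CommSemiring R]

variable (σ R) in
noncomputable abbrev idealOfVarPows (q : ℕ) : Ideal (MvPolynomial σ R) := .span (.range fun j => X j ^ q)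

theorem mem_idealOfVarPows_iff {q : ℕ} {f : MvPolynomial σ R} :
    f ∈ idealOfVarPows σ R q ↔ ∀ ν ∈ f.support, ∃ j, q ≤ ν j := by
  have hgen : (Set.range fun j => (X j : MvPolynomial σ R) ^ q) =
      (monomial · 1) '' Set.range fun j => Finsupp.single j q := by
    rw [← Set.range_comp]
    simp [X_pow_eq_monomial, Function.comp_def]
  rw [idealOfVarPows, hgen, mem_ideal_span_monomial_image]
  simp [Finsupp.single_le_iff]

theorem exists_mem_support_forall_lt_of_notMem_idealOfVarPows {q : ℕ} {f : MvPolynomial σ R}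
    (hf : f ∉ idealOfVarPows σ R q) : ∃ ν ∈ f.support, ∀ j, ν j < q := by
  simpa [mem_idealOfVarPows_iff] using hf

theorem map_iterateFrobenius_idealOfVars (p e : ℕ) [ExpChar R p] :
    (idealOfVars σ R).map (iterateFrobenius _ p e) = idealOfVarPows σ R (p ^ e) := by
  simp [Ideal.map_span, ← Set.range_comp, Function.comp_def, iterateFrobenius_def]

theorem span_pow_le_idealOfVarPows (p e : ℕ) [ExpChar R p] {I : Ideal (MvPolynomial σ R)}
    (hI : I ≤ idealOfVars σ R) :
    Ideal.span ((· ^ p ^ e) '' (I : Set (MvPolynomial σ R))) ≤ idealOfVarPows σ R (p ^ e) := by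
  rw [← map_iterateFrobenius_idealOfVars, Ideal.span_le]
  rintro _ ⟨f, hf, rfl⟩
  exact Ideal.mem_map_of_mem _ (hI hf)

theorem IsHomogeneous.mem_pow_idealOfVars {φ : MvPolynomial σ R} {c : ℕ}
    (hφ : φ.IsHomogeneous c) : φ ∈ idealOfVars σ R ^ c :=
  (mem_pow_idealOfVars_iff c φ).mpr fun x hx => by
    rw [hφ.degree_eq_sum_deg_support hx, Finsupp.degree_apply]

variable [Fintype σ]

theorem le_of_mem_pow_idealOfVars_of_notMem_idealOfVarPows {q D : ℕ} {f : MvPolynomial σ R}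
    (hD : f ∈ idealOfVars σ R ^ D) (hf : f ∉ idealOfVarPows σ R q) :
    D ≤ Fintype.card σ * (q - 1) := by
  obtain ⟨ν, hν, hlt⟩ := exists_mem_support_forall_lt_of_notMem_idealOfVarPows hf
  calc D ≤ ν.degree := (mem_pow_idealOfVars_iff D f).mp hD ν hν
    _ = ∑ j, ν j := Finsupp.degree_eq_sum ν
    _ ≤ ∑ _j : σ, (q - 1) := Finset.sum_le_sum fun j _ => Nat.le_sub_one_of_lt (hlt j)
    _ = Fintype.card σ * (q - 1) := by simp

theorem IsHomogeneous.exists_monomial_mul_notMem_idealOfVarPows {q c : ℕ}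
    {φ : MvPolynomial σ R} (hφ : φ.IsHomogeneous c) (h : φ ∉ idealOfVarPows σ R q) :
    ∃ τ : σ →₀ ℕ, τ.degree + c = Fintype.card σ * (q - 1) ∧
      monomial τ 1 * φ ∉ idealOfVarPows σ R q := by
  obtain ⟨μ, hμ, hlt⟩ := exists_mem_support_forall_lt_of_notMem_idealOfVarPows h
  let τ : σ →₀ ℕ := Finsupp.equivFunOnFinite.symm fun j => q - 1 - μ j
  have hτμ : ∀ j, (τ + μ) j = q - 1 := fun j => by
    have := hlt j
    simp only [Finsupp.add_apply, τ, Finsupp.coe_equivFunOnFinite_symm]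
    omega
  refine ⟨τ, ?_, ?_⟩
  · rw [hφ.degree_eq_sum_deg_support hμ, ← Finsupp.degree_apply, ← map_add,
      Finsupp.degree_eq_sum]
    simp [hτμ]
  · rw [mem_idealOfVarPows_iff]
    push Not
    refine ⟨τ + μ, ?_, fun j => ?_⟩
    · rwa [mem_support_iff, coeff_monomial_mul, one_mul, ← mem_support_iff]
    · rw [hτμ]
      have := hlt j
      omega

end idealOfVarPows

theorem le_idealOfVars_of_homogeneousComponent_mem {σ k : Type*} [Field k]
    {I : Ideal (MvPolynomial σ k)} (hI : I ≠ ⊤)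
    (hhom : ∀ f ∈ I, ∀ i : ℕ, homogeneousComponent i f ∈ I) : I ≤ idealOfVars σ k := by
  intro f hf
  have hcoeff : coeff 0 f = 0 := by
    by_contra h
    have hC : C (coeff 0 f) ∈ I := by simpa using hhom f hf 0
    exact hI (Ideal.eq_top_of_isUnit_mem _ hC ((Ne.isUnit h).map C))
  rw [← pow_one (idealOfVars σ k), mem_pow_idealOfVars_iff]
  intro x hx
  rw [Nat.one_le_iff_ne_zero, Ne, Finsupp.degree_eq_zero_iff]
  rintro rfl
  exact mem_support_iff.mp hx hcoeff

end MvPolynomial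

theorem stmt9_general {k : Type*} [Field k] {p : ℕ} [Fact p.Prime] [CharP k p]
    (n e q r : ℕ) (hq : q = p ^ e)
    (I : Ideal (MvPolynomial (Fin n) k))
    -- `I` is homogeneous
    (hhom : ∀ f ∈ I, ∀ i : ℕ, MvPolynomial.homogeneousComponent i f ∈ I)
    -- `R = S/I` is a normal domain
    (hdom : IsDomain (MvPolynomial (Fin n) k ⧸ I))
    -- notation: `I^{[q]}`, `(x₁^q,…,xₙ^q)`, and the irrelevant maximal ideal of `S`
    (Iq : Ideal (MvPolynomial (Fin n) k))
    (hIq : Iq = Ideal.span ((fun f => f ^ q) '' (I : Set (MvPolynomial (Fin n) k))))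
    (Xq : Ideal (MvPolynomial (Fin n) k))
    (hXq : Xq = Ideal.span (Set.range fun j : Fin n => (X j : MvPolynomial (Fin n) k) ^ q))
    (mS : Ideal (MvPolynomial (Fin n) k))
    (hmS : mS = Ideal.span (Set.range (X : Fin n → MvPolynomial (Fin n) k)))
    -- the degrees `−d₁ < ⋯ < −d_r` of a minimal generating set of `ω_R^{(1−q)}`, transported
    -- through the graded isomorphism `(I^{[q]} :_S I)/I^{[q]} ≅ ω_R^{(1−q)}(n − nq)`:
    (d : Fin r → ℤ)
    (c : Fin r → ℕ) (hc : ∀ i, (c i : ℤ) = (n : ℤ) * ((q : ℤ) - 1) - d i)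
    (g : Fin r → MvPolynomial (Fin n) k)
    (hg1 : ∀ i, (g i).IsHomogeneous (c i))
    (hg2 : ∀ i, g i ∈ Iq.colon I)
    -- the `g i` generate `(I^{[q]} :_S I)/I^{[q]}` …
    (hgen : Iq.colon I = Iq ⊔ Ideal.span (Set.range g))
    -- `ν_e(𝔪) = max{r ≥ 0 : 𝔪^r·(I^{[q]}:I) ⊄ (x₁^q,…,xₙ^q)}`
    (νe : ℕ)
    (hν1 : ¬ (mS ^ νe * Iq.colon I ≤ Xq))
    (hν2 : ∀ s : ℕ, νe < s → mS ^ s * Iq.colon I ≤ Xq) :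
    ∃ i : Fin r, (νe : ℤ) = d i := by
  subst hIq hmS
  replace hXq : Xq = idealOfVarPows (Fin n) k q := hXq
  subst hXq
  have hIqX : Ideal.span ((· ^ q) '' (I : Set (MvPolynomial (Fin n) k))) ≤
      idealOfVarPows (Fin n) k q := hq ▸ span_pow_le_idealOfVarPows p e
        (le_idealOfVars_of_homogeneousComponent_mem
          (Ideal.Quotient.nontrivial_iff.mp hdom.toNontrivial) hhom)
  obtain ⟨i, m, hm, hmg⟩ := Ideal.exists_mul_notMem_of_not_mul_sup_span_le hIqX (hgen ▸ hν1)
  have hupper : νe + c i ≤ n * (q - 1) := by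
    have hmem := Ideal.mul_mem_mul hm (hg1 i).mem_pow_idealOfVars
    rw [← pow_add] at hmem
    simpa using le_of_mem_pow_idealOfVars_of_notMem_idealOfVarPows hmem hmg
  obtain ⟨τ, hτ, hτg⟩ := (hg1 i).exists_monomial_mul_notMem_idealOfVarPows
    fun h => hmg (Ideal.mul_mem_left _ m h)
  have hlower : τ.degree ≤ νe := by
    by_contra! hlt
    refine hτg (hν2 _ hlt (Ideal.mul_mem_mul ?_ (hg2 i)))
    exact (monomial_mem_pow_idealOfVars_iff _ _ one_ne_zero).mpr le_rfl
  have hq1 : 1 ≤ q := hq ▸ Nat.one_le_pow _ _ (Fact.out : p.Prime).pos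
  refine ⟨i, ?_⟩
  have hci := hc i
  rw [Fintype.card_fin] at hτ
  have hN : ((n * (q - 1) : ℕ) : ℤ) = n * ((q : ℤ) - 1) := by push_cast [hq1]; ring
  omega

/-- Let `S` be a standard graded polynomial ring in `n` variables over an
`F`-finite field of characteristic `p`, `I` a homogeneous ideal with `R = S/I` an `F`-pure
normal domain (`F`-purity being encoded via Fedder's criterion
`(I^{[q]} :_S I) ⊄ (x₁^q,…,xₙ^q)`), and `q = p^e`.  If the graded module
`(I^{[q]} :_S I)/I^{[q]}` is isomorphic, as a graded module, to the `(1−q)`-th symbolic power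
`ω_R^{(1−q)}` shifted by `n(q−1)` — which we encode by saying that `(I^{[q]} :_S I)/I^{[q]}`
is minimally generated by homogeneous elements `g₁,…,g_r` of degrees `n(q−1) − d₁, …,
n(q−1) − d_r`, where `−d₁ < ⋯ < −d_r` are the degrees of a minimal generating set of
`ω_R^{(1−q)}` — then `ν_e(𝔪) = d_i` for some `i`, where `𝔪` is the homogeneous maximal ideal
of `R` and `ν_e(𝔪) = max{r ≥ 0 : 𝔪^r·(I^{[q]}:I) ⊄ (x₁^q,…,xₙ^q)}`. -/
theorem stmt9 {k : Type*} [Field k] {p : ℕ} [Fact p.Prime] [CharP k p]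
    (n e q r : ℕ) (hq : q = p ^ e)
    (I : Ideal (MvPolynomial (Fin n) k))
    -- `I` is homogeneous
    (hhom : ∀ f ∈ I, ∀ i : ℕ, MvPolynomial.homogeneousComponent i f ∈ I)
    -- `R = S/I` is a normal domain
    (hdom : IsDomain (MvPolynomial (Fin n) k ⧸ I))
    (hnormal : IsIntegrallyClosed (MvPolynomial (Fin n) k ⧸ I))
    -- notation: `I^{[q]}`, `(x₁^q,…,xₙ^q)`, and the irrelevant maximal ideal of `S`
    (Iq : Ideal (MvPolynomial (Fin n) k))
    (hIq : Iq = Ideal.span ((fun f => f ^ q) '' (I : Set (MvPolynomial (Fin n) k))))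
    (Xq : Ideal (MvPolynomial (Fin n) k))
    (hXq : Xq = Ideal.span (Set.range fun j : Fin n => (X j : MvPolynomial (Fin n) k) ^ q))
    (mS : Ideal (MvPolynomial (Fin n) k))
    (hmS : mS = Ideal.span (Set.range (X : Fin n → MvPolynomial (Fin n) k)))
    -- `R` is `F`-pure (Fedder's criterion)
    (hFpure : ¬ (Iq.colon I ≤ Xq))
    -- the degrees `−d₁ < ⋯ < −d_r` of a minimal generating set of `ω_R^{(1−q)}`, transported
    -- through the graded isomorphism `(I^{[q]} :_S I)/I^{[q]} ≅ ω_R^{(1−q)}(n − nq)`: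
    (d : Fin r → ℤ) (hd : StrictAnti d)
    (c : Fin r → ℕ) (hc : ∀ i, (c i : ℤ) = (n : ℤ) * ((q : ℤ) - 1) - d i)
    (g : Fin r → MvPolynomial (Fin n) k)
    (hg1 : ∀ i, (g i).IsHomogeneous (c i))
    (hg2 : ∀ i, g i ∈ Iq.colon I)
    -- the `g i` generate `(I^{[q]} :_S I)/I^{[q]}` …
    (hgen : Iq.colon I = Iq ⊔ Ideal.span (Set.range g))
    -- … minimally
    (hmin : ∀ i, g i ∉ Iq ⊔ mS * Iq.colon I)
    -- `ν_e(𝔪) = max{r ≥ 0 : 𝔪^r·(I^{[q]}:I) ⊄ (x₁^q,…,xₙ^q)}`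
    (νe : ℕ)
    (hν1 : ¬ (mS ^ νe * Iq.colon I ≤ Xq))
    (hν2 : ∀ s : ℕ, νe < s → mS ^ s * Iq.colon I ≤ Xq) :
    ∃ i : Fin r, (νe : ℤ) = d i :=
  stmt9_general n e q r hq I hhom hdom Iq hIq Xq hXq mS hmS d c hc g hg1 hg2 hgen νe hν1 hν2
end
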